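/- arXiv:1704.06907 — 2 statements merged into one kernel-verified Lean document; each statement's English description precedes it below -/
import Mathlib

section
/- Let 𝒫 be a finite converging family of paths in a graph, all ending at a common vertex v, where converging means: if two paths of 𝒫 share a vertex w, their suffixes from w to v coincide. Suppose additionally that the paths in 𝒫 have pairwise distinct starting vertices. Then the union of the paths in 𝒫, viewed as a set of edges, forms a tree (an in-tree rooted at v) on the vertices it covers. -/
/-!
An edge `(a, b)` of a path `l` is an occurrence of `[a, b]` as an infix of `l`. On a simple path the
suffix from `a` then begins with `a, b`, so convergence forces all edges leaving `a` to agree; `v`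
has no outgoing edge because it is the last vertex of simple paths; and following any path from
one of its vertices leads to its last vertex `v`.
-/

/-- The suffix of the list `l` starting at the first occurrence of `w`. -/
def suffixFrom {V : Type*} [DecidableEq V] (w : V) (l : List V) : List V :=
  l.dropWhile (fun x => x != w)

/-- The edge relation of the union of a family of paths. -/
def unionEdge {V : Type*} (Ps : Finset (List V)) (a b : V) : Prop :=
  ∃ p ∈ Ps, (a, b) ∈ p.zip p.tail

namespace List

variable {α : Type*} {a b v : α} {l : List α}

theorem mem_zip_tail_iff_infix : (a, b) ∈ l.zip l.tail ↔ [a, b] <:+: l := by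
  induction l with
  | nil => simp
  | cons x rest ih =>
    cases rest with
    | nil => simp [infix_cons_iff]
    | cons y t => simp_all [infix_cons_iff]

theorem exists_pair_infix_of_mem_of_ne (ha : a ∈ l) (hv : l.getLast? = some v) (hav : a ≠ v) :
    ∃ b, [a, b] <:+: l := by
  obtain ⟨s, t, rfl⟩ := append_of_mem ha
  cases t with
  | nil => simp_all
  | cons b t => exact ⟨b, s, t, by simp⟩

theorem Nodup.not_pair_infix_of_getLast? (hl : l.Nodup) (hv : l.getLast? = some v) :
    ¬ [v, b] <:+: l := by
  rintro ⟨s, t, rfl⟩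
  have hv' : v ∈ b :: t := mem_of_getLast? (by simpa using hv)
  simp_all [nodup_append]

theorem relationReflTransGen_pair_infix_of_mem (ha : a ∈ l) (hv : l.getLast? = some v) :
    Relation.ReflTransGen (fun x y => [x, y] <:+: l) a v := by
  obtain ⟨s, t, rfl⟩ := append_of_mem ha
  refine relationReflTransGen_of_exists_isChain_cons t ?_ ?_
  · refine isChain_iff_forall_rel_of_append_cons_cons.2 fun x y l₁ l₂ h => ?_
    exact ⟨s ++ l₁, l₂, by simp [h]⟩
  · simpa [getLast?_eq_some_getLast] using hv

end List

section suffixFrom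

variable {V : Type*} [DecidableEq V] {a b : V} {l s t : List V}

theorem suffixFrom_append_cons_of_notMem (ha : a ∉ s) : suffixFrom a (s ++ a :: t) = a :: t := by
  rw [suffixFrom, List.dropWhile_append_of_pos fun x hx => by simpa using ne_of_mem_of_not_mem hx ha]
  simp

theorem List.Nodup.suffixFrom_eq_of_pair_infix (hl : l.Nodup) (h : [a, b] <:+: l) :
    ∃ t, suffixFrom a l = a :: b :: t := by
  obtain ⟨s, t, rfl⟩ := h
  simp only [List.append_assoc, List.cons_append, List.nil_append] at hl ⊢
  have ha : a ∉ s := fun has => (List.nodup_append.1 hl).2.2 a has a List.mem_cons_self rfl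
  exact ⟨t, suffixFrom_append_cons_of_notMem ha⟩

end suffixFrom

section unionEdge

variable {V : Type*} {Ps : Finset (List V)} {a b b' : V}

theorem unionEdge_iff_exists_pair_infix : unionEdge Ps a b ↔ ∃ p ∈ Ps, [a, b] <:+: p := by
  simp only [unionEdge, List.mem_zip_tail_iff_infix]

def IsConverging [DecidableEq V] (Ps : Finset (List V)) : Prop :=
  ∀ p ∈ Ps, ∀ q ∈ Ps, ∀ w, w ∈ p → w ∈ q → suffixFrom w p = suffixFrom w q

theorem IsConverging.unionEdge_unique [DecidableEq V] (hconv : IsConverging Ps)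
    (hnodup : ∀ p ∈ Ps, p.Nodup) (hb : unionEdge Ps a b) (hb' : unionEdge Ps a b') : b = b' := by
  obtain ⟨p, hp, hab⟩ := unionEdge_iff_exists_pair_infix.1 hb
  obtain ⟨q, hq, hab'⟩ := unionEdge_iff_exists_pair_infix.1 hb'
  obtain ⟨t, ht⟩ := (hnodup p hp).suffixFrom_eq_of_pair_infix hab
  obtain ⟨t', ht'⟩ := (hnodup q hq).suffixFrom_eq_of_pair_infix hab'
  have hsuffix := hconv p hp q hq a (hab.subset (by simp)) (hab'.subset (by simp))
  rw [ht, ht'] at hsuffix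
  exact (List.cons_eq_cons.1 (List.cons_eq_cons.1 hsuffix).2).1

end unionEdge

theorem stmt_5_general {V : Type*} [DecidableEq V] (v : V) (Ps : Finset (List V))
    (hlast : ∀ p ∈ Ps, p.getLast? = some v)
    (hnodup : ∀ p ∈ Ps, p.Nodup)
    (hconv : ∀ p ∈ Ps, ∀ q ∈ Ps, ∀ w, w ∈ p → w ∈ q →
      suffixFrom w p = suffixFrom w q) :
    (∀ a, (∃ p ∈ Ps, a ∈ p) → a ≠ v → ∃! b, unionEdge Ps a b) ∧
    (∀ b, ¬ unionEdge Ps v b) ∧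
    (∀ a, (∃ p ∈ Ps, a ∈ p) → Relation.ReflTransGen (unionEdge Ps) a v) := by
  refine ⟨fun a ⟨p, hp, hap⟩ hav => ?_, fun b hvb => ?_, fun a ⟨p, hp, hap⟩ => ?_⟩
  · obtain ⟨b, hab⟩ := List.exists_pair_infix_of_mem_of_ne hap (hlast p hp) hav
    have hb : unionEdge Ps a b := unionEdge_iff_exists_pair_infix.2 ⟨p, hp, hab⟩
    exact ⟨b, hb, fun b' hb' => IsConverging.unionEdge_unique hconv hnodup hb' hb⟩
  · obtain ⟨p, hp, hvb⟩ := unionEdge_iff_exists_pair_infix.1 hvb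
    exact (hnodup p hp).not_pair_infix_of_getLast? (hlast p hp) hvb
  · exact Relation.ReflTransGen.mono (fun x y hxy => unionEdge_iff_exists_pair_infix.2 ⟨p, hp, hxy⟩)
      _ _ (List.relationReflTransGen_pair_infix_of_mem hap (hlast p hp))

/-- a converging family of (simple) paths to a common endpoint `v`
with pairwise distinct starting vertices has, as a union of edges, the structure
of an in-tree rooted at `v`: every covered vertex other than `v` has a unique
successor, `v` has none, and every covered vertex reaches `v`. -/
theorem stmt_5 {V : Type*} [DecidableEq V] (v : V) (Ps : Finset (List V))
    (hne : ∀ p ∈ Ps, p ≠ [])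
    (hlast : ∀ p ∈ Ps, p.getLast? = some v)
    (hnodup : ∀ p ∈ Ps, p.Nodup)
    (hheads : ∀ p ∈ Ps, ∀ q ∈ Ps, p.head? = q.head? → p = q)
    (hconv : ∀ p ∈ Ps, ∀ q ∈ Ps, ∀ w, w ∈ p → w ∈ q →
      suffixFrom w p = suffixFrom w q) :
    (∀ a, (∃ p ∈ Ps, a ∈ p) → a ≠ v → ∃! b, unionEdge Ps a b) ∧
    (∀ b, ¬ unionEdge Ps v b) ∧
    (∀ a, (∃ p ∈ Ps, a ∈ p) → Relation.ReflTransGen (unionEdge Ps) a v) :=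
  stmt_5_general v Ps hlast hnodup hconv
end

section
/- Let 𝒫 be a finite converging family of paths in a graph to a common vertex v (if two paths share a vertex w, their suffixes from w to v coincide), with pairwise distinct sources. Then the number of vertices w that lie on at least two distinct paths of 𝒫 and are the first such shared vertex along some path (merge points) is at most |𝒫| − 1. -/
/-- `w` is a merge point of the family `Ps`: it lies on two distinct paths and
is the first shared vertex along one of them. -/
def IsMergePoint {V : Type*} [DecidableEq V] (Ps : Finset (List V)) (w : V) : Prop :=
  ∃ p ∈ Ps, ∃ q ∈ Ps, p ≠ q ∧ w ∈ p ∧ w ∈ q ∧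
    ∀ x ∈ p.takeWhile (fun x => x != w), x ∉ q

section Paths

variable {V : Type*} [DecidableEq V]

/-- The vertex just before the first occurrence of `w` in `r`; `none` if `r` starts at `w`. -/
def prevVertex (r : List V) (w : V) : Option V :=
  (r.takeWhile (fun x => x != w)).getLast?

theorem takeWhile_append_suffixFrom (w : V) (l : List V) :
    l.takeWhile (fun x => x != w) ++ suffixFrom w l = l :=
  List.takeWhile_append_dropWhile

theorem mem_of_mem_suffixFrom {w x : V} {l : List V} (h : x ∈ suffixFrom w l) : x ∈ l :=
  (List.dropWhile_sublist _).mem h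

theorem suffixFrom_eq_cons {w : V} {l : List V} (h : w ∈ l) :
    ∃ t, suffixFrom w l = w :: t := by
  induction l with
  | nil => cases h
  | cons a l ih =>
    by_cases haw : a = w
    · subst haw
      simp [suffixFrom]
    · simpa [suffixFrom, haw] using ih (List.mem_of_ne_of_mem (Ne.symm haw) h)

theorem mem_of_suffixFrom_ne_nil {w : V} {l : List V} (h : suffixFrom w l ≠ []) : w ∈ l := by
  by_contra hw
  exact h (List.dropWhile_eq_nil_iff.mpr fun x hx => bne_iff_ne.mpr (ne_of_mem_of_not_mem hx hw))

theorem mem_suffixFrom_or_mem_suffixFrom {w₁ w₂ : V} {l : List V} (h₁ : w₁ ∈ l) (h₂ : w₂ ∈ l) :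
    w₂ ∈ suffixFrom w₁ l ∨ w₁ ∈ suffixFrom w₂ l := by
  induction l with
  | nil => cases h₁
  | cons a l ih =>
    by_cases ha₁ : a = w₁
    · subst ha₁
      simpa [suffixFrom] using Or.inl h₂
    by_cases ha₂ : a = w₂
    · subst ha₂
      simpa [suffixFrom] using Or.inr h₁
    simpa [suffixFrom, ha₁, ha₂] using
      ih (List.mem_of_ne_of_mem (Ne.symm ha₁) h₁) (List.mem_of_ne_of_mem (Ne.symm ha₂) h₂)

theorem head?_eq_of_prevVertex_eq_none {r : List V} {w : V} (hw : w ∈ r)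
    (h : prevVertex r w = none) : r.head? = some w := by
  obtain ⟨t, ht⟩ := suffixFrom_eq_cons hw
  rw [← takeWhile_append_suffixFrom w r, List.getLast?_eq_none_iff.mp h, ht]
  rfl

theorem prevVertex_append_cons {l₁ l₂ : List V} {a w : V} (hw : w ∉ l₁) (ha : a ≠ w) :
    prevVertex (l₁ ++ a :: l₂) w = prevVertex (a :: l₂) w := by
  have hl₁ : ∀ x ∈ l₁, (x != w) = true := fun x hx => bne_iff_ne.mpr (ne_of_mem_of_not_mem hx hw)
  simp [prevVertex, List.takeWhile_append_of_pos hl₁, List.getLast?_append, ha, List.getLast?_cons]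

theorem prevVertex_suffixFrom {r : List V} {w₁ w₂ : V} (hr : r.Nodup)
    (h₂ : w₂ ∈ suffixFrom w₁ r) (hne : w₂ ≠ w₁) :
    prevVertex (suffixFrom w₁ r) w₂ = prevVertex r w₂ := by
  obtain ⟨t, ht⟩ := suffixFrom_eq_cons (mem_of_suffixFrom_ne_nil (List.ne_nil_of_mem h₂))
  have hdisj := List.disjoint_of_nodup_append ((takeWhile_append_suffixFrom w₁ r).symm ▸ hr)
  conv_rhs => rw [← takeWhile_append_suffixFrom w₁ r]
  rw [ht, prevVertex_append_cons (fun h => hdisj h h₂) (Ne.symm hne)]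

theorem prevVertex_eq_of_suffixFrom_eq {p q : List V} {w₁ w₂ : V} (hp : p.Nodup) (hq : q.Nodup)
    (hs : suffixFrom w₁ p = suffixFrom w₁ q) (h₂ : w₂ ∈ suffixFrom w₁ p) (hne : w₂ ≠ w₁) :
    prevVertex p w₂ = prevVertex q w₂ := by
  rw [← prevVertex_suffixFrom hp h₂ hne, hs, prevVertex_suffixFrom hq (hs ▸ h₂) hne]

theorem IsMergePoint.exists_prevVertex_ne {Ps : Finset (List V)} {w : V}
    (hheads : ∀ p ∈ Ps, ∀ q ∈ Ps, p.head? = q.head? → p = q) (h : IsMergePoint Ps w) :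
    ∃ p ∈ Ps.filter (w ∈ ·), ∃ q ∈ Ps.filter (w ∈ ·), prevVertex p w ≠ prevVertex q w := by
  obtain ⟨p, hp, q, hq, hpq, hwp, hwq, hfirst⟩ := h
  refine ⟨p, Finset.mem_filter.mpr ⟨hp, hwp⟩, q, Finset.mem_filter.mpr ⟨hq, hwq⟩, fun heq => ?_⟩
  cases hu : prevVertex p w with
  | none =>
    exact hpq (hheads p hp q hq <| (head?_eq_of_prevVertex_eq_none hwp hu).trans
      (head?_eq_of_prevVertex_eq_none hwq (heq ▸ hu)).symm)
  | some u =>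
    exact hfirst u (List.mem_of_getLast? hu)
      ((List.takeWhile_sublist _).mem (List.mem_of_getLast? (heq ▸ hu : prevVertex q w = some u)))

end Paths

theorem exists_isLeast_and_first_ne {α β : Type*} [LinearOrder α] {T : Finset α} {k : α → β}
    (h : ∃ p ∈ T, ∃ q ∈ T, k p ≠ k q) :
    ∃ m f, IsLeast (T : Set α) m ∧ f ∈ T ∧ k f ≠ k m ∧ ∀ r ∈ T, r < f → k r = k m := by
  classical
  obtain ⟨p, hp, q, hq, hpq⟩ := h
  set m := T.min' ⟨p, hp⟩
  have hF : (T.filter (k · ≠ k m)).Nonempty := by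
    by_cases hpm : k p = k m
    · exact ⟨q, Finset.mem_filter.mpr ⟨hq, fun hqm => hpq (hpm.trans hqm.symm)⟩⟩
    · exact ⟨p, Finset.mem_filter.mpr ⟨hp, hpm⟩⟩
  obtain ⟨hfT, hfm⟩ := Finset.mem_filter.mp (Finset.min'_mem _ hF)
  refine ⟨m, _, Finset.isLeast_min' T ⟨p, hp⟩, hfT, hfm, fun r hr hlt => ?_⟩
  by_contra hrm
  exact hlt.not_ge (Finset.min'_le _ r (Finset.mem_filter.mpr ⟨hr, hrm⟩))

theorem exists_injOn_isMergePoint {V : Type*} [DecidableEq V] {Ps : Finset (List V)}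
    (hnodup : ∀ p ∈ Ps, p.Nodup)
    (hheads : ∀ p ∈ Ps, ∀ q ∈ Ps, p.head? = q.head? → p = q)
    (hconv : ∀ p ∈ Ps, ∀ q ∈ Ps, ∀ w, w ∈ p → w ∈ q → suffixFrom w p = suffixFrom w q)
    (hPs : Ps.Nonempty) :
    ∃ μ ∈ Ps, ∃ f : V → List V, Set.MapsTo f {w | IsMergePoint Ps w} ↑(Ps.erase μ) ∧
      Set.InjOn f {w | IsMergePoint Ps w} := by
  let : LinearOrder (List V) := IsWellOrder.linearOrder WellOrderingRel
  choose! m f hm hf hfm hbefore using fun w (hw : IsMergePoint Ps w) =>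
    exists_isLeast_and_first_ne (hw.exists_prevVertex_ne hheads)
  have hlt : ∀ w, IsMergePoint Ps w → m w < f w := fun w hw =>
    ((hm w hw).2 (hf w hw)).lt_of_ne fun e => hfm w hw (e ▸ rfl)
  have hcore : ∀ w₁ w₂, IsMergePoint Ps w₁ → IsMergePoint Ps w₂ → f w₁ = f w₂ →
      w₂ ∈ suffixFrom w₁ (f w₁) → w₂ = w₁ := by
    intro w₁ w₂ h₁ h₂ hff hmem
    by_contra hne
    obtain ⟨hpPs, hw₁p⟩ := Finset.mem_filter.mp (hf w₁ h₁)
    obtain ⟨hmPs, hw₁m⟩ := Finset.mem_filter.mp (hm w₁ h₁).1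
    have hs := hconv _ hpPs _ hmPs w₁ hw₁p hw₁m
    have hw₂m : w₂ ∈ m w₁ := mem_of_mem_suffixFrom (hs ▸ hmem)
    have hsame := prevVertex_eq_of_suffixFrom_eq (hnodup _ hpPs) (hnodup _ hmPs) hs hmem hne
    have hprev := hbefore w₂ h₂ (m w₁) (Finset.mem_filter.mpr ⟨hmPs, hw₂m⟩) (hff ▸ hlt w₁ h₁)
    exact hfm w₂ h₂ (hff ▸ hsame.trans hprev)
  refine ⟨Ps.min' hPs, Ps.min'_mem hPs, f, fun w hw => ?_, fun w₁ h₁ w₂ h₂ hff => ?_⟩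
  · have hμ : Ps.min' hPs < f w :=
      (Ps.min'_le _ (Finset.mem_filter.mp (hm w hw).1).1).trans_lt (hlt w hw)
    exact Finset.mem_erase.mpr ⟨hμ.ne', (Finset.mem_filter.mp (hf w hw)).1⟩
  · have hw₁ : w₁ ∈ f w₁ := (Finset.mem_filter.mp (hf w₁ h₁)).2
    have hw₂ : w₂ ∈ f w₁ := hff ▸ (Finset.mem_filter.mp (hf w₂ h₂)).2
    rcases mem_suffixFrom_or_mem_suffixFrom hw₁ hw₂ with h | h
    · exact (hcore w₁ w₂ h₁ h₂ hff h).symm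
    · exact hcore w₂ w₁ h₂ h₁ hff.symm (hff ▸ h)

theorem stmt_15_general {V : Type*} [DecidableEq V] (Ps : Finset (List V))
    (hnodup : ∀ p ∈ Ps, p.Nodup)
    (hheads : ∀ p ∈ Ps, ∀ q ∈ Ps, p.head? = q.head? → p = q)
    (hconv : ∀ p ∈ Ps, ∀ q ∈ Ps, ∀ w, w ∈ p → w ∈ q →
      suffixFrom w p = suffixFrom w q) :
    {w : V | IsMergePoint Ps w}.ncard ≤ Ps.card - 1 := by
  rcases Ps.eq_empty_or_nonempty with rfl | hPs
  · simp [IsMergePoint]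
  obtain ⟨μ, hμ, f, hmaps, hinj⟩ := exists_injOn_isMergePoint hnodup hheads hconv hPs
  calc {w : V | IsMergePoint Ps w}.ncard
      ≤ (↑(Ps.erase μ) : Set (List V)).ncard :=
        Set.ncard_le_ncard_of_injOn f hmaps hinj (Ps.erase μ).finite_toSet
    _ = Ps.card - 1 := by rw [Set.ncard_coe_finset, Finset.card_erase_of_mem hμ]

/-- a converging family of simple paths to `v` with pairwise
distinct sources has at most `|Ps| − 1` merge points. -/
theorem stmt_15 {V : Type*} [DecidableEq V] (v : V) (Ps : Finset (List V))
    (hne : ∀ p ∈ Ps, p ≠ [])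
    (hlast : ∀ p ∈ Ps, p.getLast? = some v)
    (hnodup : ∀ p ∈ Ps, p.Nodup)
    (hheads : ∀ p ∈ Ps, ∀ q ∈ Ps, p.head? = q.head? → p = q)
    (hconv : ∀ p ∈ Ps, ∀ q ∈ Ps, ∀ w, w ∈ p → w ∈ q →
      suffixFrom w p = suffixFrom w q) :
    {w : V | IsMergePoint Ps w}.ncard ≤ Ps.card - 1 :=
  stmt_15_general Ps hnodup hheads hconv
end
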